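/- Let f(x) = ∑_{n≥0} f_n x^n be the formal power series satisfying f = 1 + 3x·f + 2x²·f², where f_n is the sum of weights of (3,2)-Motzkin paths of length n. Then f(x) = (1 - 3x - √(1 - 6x + x²)) / (4x²), and f_n equals the n-th little Schröder number. -/

import Mathlib

/-- A Motzkin step: up, down, or horizontal. -/
inductive Step | U | D | H
deriving DecidableEq

instance : Fintype Step :=
  ⟨{Step.U, Step.D, Step.H}, fun x => by cases x <;> simp⟩

/-- The height change of one step. -/
def Step.val : Step → ℤ
  | Step.U => 1
  | Step.D => -1
  | Step.H => 0

/-- The weight of a step: up steps weigh `1`, down steps `t`, horizontal steps `k`. -/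
def Step.wt (k t : ℕ) : Step → ℕ
  | Step.U => 1
  | Step.D => t
  | Step.H => k

/-- The height of the path `p` after its first `m` steps. -/
def pathHeight {n : ℕ} (p : Fin n → Step) (m : ℕ) : ℤ :=
  ∑ i ∈ Finset.univ.filter (fun i : Fin n => (i : ℕ) < m), (p i).val

/-- A partial Motzkin path: never goes below the x-axis. -/
def IsPartialMotzkin {n : ℕ} (p : Fin n → Step) : Prop :=
  ∀ m ≤ n, 0 ≤ pathHeight p m

/-- A (complete) Motzkin path: never below the x-axis and ends on the x-axis. -/
def IsMotzkin {n : ℕ} (p : Fin n → Step) : Prop :=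
  IsPartialMotzkin p ∧ pathHeight p n = 0

instance {n : ℕ} (p : Fin n → Step) : Decidable (IsPartialMotzkin p) :=
  Nat.decidableBallLE n _

instance {n : ℕ} (p : Fin n → Step) : Decidable (IsMotzkin p) :=
  inferInstanceAs (Decidable (_ ∧ _))

/-- The weight of a weighted Motzkin path. -/
def pathWt {n : ℕ} (k t : ℕ) (p : Fin n → Step) : ℕ := ∏ i, (p i).wt k t

/-- Sum of the weights of all `(k,t)`-Motzkin paths of length `n`. -/
def motzkinWt (k t n : ℕ) : ℕ :=
  ∑ p ∈ Finset.univ.filter (fun p : Fin n → Step => IsMotzkin p), pathWt k t p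

/-- Sum of the weights of all partial `(k,t)`-Motzkin paths of length `n`
ending at height `h`. -/
def partialWt (k t n h : ℕ) : ℕ :=
  ∑ p ∈ Finset.univ.filter
      (fun p : Fin n → Step => IsPartialMotzkin p ∧ pathHeight p n = (h : ℤ)),
    pathWt k t p

/-- A Schröder step: up `(1,1)`, down `(1,-1)`, or horizontal `(2,0)`. -/
inductive SStep | U | D | H
deriving DecidableEq

/-- The x-length of a Schröder step. -/
def SStep.x : SStep → ℕ
  | SStep.U => 1
  | SStep.D => 1
  | SStep.H => 2

/-- The height change of a Schröder step. -/
def SStep.y : SStep → ℤ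
  | SStep.U => 1
  | SStep.D => -1
  | SStep.H => 0

/-- The total x-length of a Schröder-step word. -/
def sxlen (l : List SStep) : ℕ := (l.map SStep.x).sum

/-- The final height of a Schröder-step word. -/
def sysum (l : List SStep) : ℤ := (l.map SStep.y).sum

/-- A Schröder path of length `2n` with no peak at level one: nonnegative prefix
heights, final height `0`, total x-length `2n`, and no `UD` factor whose peak is
at height `1`. -/
def IsLittleSchroederPath (n : ℕ) (l : List SStep) : Prop :=
  sxlen l = 2 * n ∧ (∀ pre, pre <+: l → 0 ≤ sysum pre) ∧ sysum l = 0 ∧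
    ¬ ∃ p q, l = p ++ SStep.U :: SStep.D :: q ∧ sysum p = 0

/-- The `n`-th little Schröder number (paper's indexing): the number of Schröder paths
of length `2(n+1)` with no peaks at level one. -/
noncomputable def littleSchroeder (n : ℕ) : ℕ :=
  Nat.card {l : List SStep // IsLittleSchroederPath (n + 1) l}

/-!
Let `S` and `N` be the generating series, by semilength, of Schröder paths and of Schröder paths
with no peak at level one. Splitting a path at its first return to the axis (it is `H P` or
`U A D B`) gives `S = 1 + X S + X S²` and `N = 1 + X N + X (S - 1) N`: the factor `S - 1` is there
because `U A D B` has a peak at level one exactly when `A` is empty or `B` has one. Multiplying by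
the unit `1 - X S` yields `S + 1 = 2 N`, and eliminating `S` shows that the little Schröder series
`L`, with `N = 1 + X L`, satisfies `L = 1 + 3 X L + 2 X² L²`. A power series solution of such a
quadratic equation is unique, so `L` is the Motzkin series `f`.
-/

open Finset PowerSeries

instance : Fintype SStep :=
  ⟨{SStep.U, SStep.D, SStep.H}, fun s => by cases s <;> simp⟩

attribute [simp] SStep.x SStep.y

namespace List

variable {α : Type*} {P : List α → Prop}

theorem forall_prefix_cons_iff {a : α} {l : List α} :
    (∀ p, p <+: a :: l → P p) ↔ P [] ∧ ∀ t, t <+: l → P (a :: t) := by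
  simp only [prefix_cons_iff]
  constructor
  · exact fun h => ⟨h [] (.inl rfl), fun t ht => h _ (.inr ⟨t, rfl, ht⟩)⟩
  · rintro ⟨h₀, h⟩ p (rfl | ⟨t, rfl, ht⟩)
    exacts [h₀, h t ht]

theorem forall_prefix_append_iff {A B : List α} :
    (∀ p, p <+: A ++ B → P p) ↔ (∀ p, p <+: A → P p) ∧ ∀ t, t <+: B → P (A ++ t) := by
  constructor
  · exact fun h => ⟨fun p hp => h p (prefix_append_of_prefix hp),
      fun t ht => h _ ((prefix_append_right_inj A).mpr ht)⟩
  · rintro ⟨hA, hB⟩ p hp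
    rcases prefix_or_prefix_of_prefix hp (prefix_append A B) with hpA | ⟨t, rfl⟩
    · exact hA p hpA
    · exact hB t ((prefix_append_right_inj A).mp hp)

theorem exists_shortest_prefix_not {l : List α} (h₀ : P []) (h : ∃ p, p <+: l ∧ ¬ P p) :
    ∃ A s B, l = A ++ s :: B ∧ (∀ p, p <+: A → P p) ∧ ¬ P (A ++ [s]) := by
  induction l generalizing P with
  | nil =>
    obtain ⟨p, hp, hPp⟩ := h
    exact absurd (prefix_nil.mp hp ▸ h₀) hPp
  | cons a l ih =>
    by_cases ha : P [a]
    · obtain ⟨A, s, B, rfl, hA, hs⟩ := ih (P := fun t => P (a :: t)) ha (by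
        obtain ⟨p, hp, hPp⟩ := h
        rcases prefix_cons_iff.mp hp with rfl | ⟨t, rfl, ht⟩
        exacts [absurd h₀ hPp, ⟨t, ht, hPp⟩])
      exact ⟨a :: A, s, B, rfl, forall_prefix_cons_iff.mpr ⟨h₀, hA⟩, hs⟩
    · exact ⟨[], a, l, rfl, fun p hp => prefix_nil.mp hp ▸ h₀, ha⟩

end List

@[simp] lemma sysum_nil : sysum [] = 0 := rfl

@[simp] lemma sysum_cons (s : SStep) (l : List SStep) : sysum (s :: l) = s.y + sysum l := by
  simp [sysum]

@[simp] lemma sysum_append (l₁ l₂ : List SStep) : sysum (l₁ ++ l₂) = sysum l₁ + sysum l₂ := by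
  simp [sysum]

@[simp] lemma sxlen_nil : sxlen [] = 0 := rfl

@[simp] lemma sxlen_cons (s : SStep) (l : List SStep) : sxlen (s :: l) = s.x + sxlen l := by
  simp [sxlen]

@[simp] lemma sxlen_append (l₁ l₂ : List SStep) : sxlen (l₁ ++ l₂) = sxlen l₁ + sxlen l₂ := by
  simp [sxlen]

lemma length_le_sxlen (l : List SStep) : l.length ≤ sxlen l := by
  induction l with
  | nil => simp
  | cons s l ih => cases s <;> simp <;> omega

lemma even_sxlen_add_sysum (l : List SStep) : Even ((sxlen l : ℤ) + sysum l) := by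
  induction l with
  | nil => simp
  | cons s l ih =>
    obtain ⟨c, hc⟩ := ih
    cases s
    · exact ⟨c + 1, by push_cast [sxlen_cons, sysum_cons, SStep.x, SStep.y]; omega⟩
    · exact ⟨c, by push_cast [sxlen_cons, sysum_cons, SStep.x, SStep.y]; omega⟩
    · exact ⟨c + 1, by push_cast [sxlen_cons, sysum_cons, SStep.x, SStep.y]; omega⟩

def IsSchroederPath (l : List SStep) : Prop :=
  (∀ p, p <+: l → 0 ≤ sysum p) ∧ sysum l = 0

def HasNoLowPeak (l : List SStep) : Prop :=
  ¬ ∃ p q, l = p ++ SStep.U :: SStep.D :: q ∧ sysum p = 0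

def arch (A B : List SStep) : List SStep := SStep.U :: (A ++ SStep.D :: B)

lemma isLittleSchroederPath_iff {n : ℕ} {l : List SStep} :
    IsLittleSchroederPath n l ↔ sxlen l = 2 * n ∧ IsSchroederPath l ∧ HasNoLowPeak l := by
  simp only [IsLittleSchroederPath, IsSchroederPath, HasNoLowPeak, and_assoc]

lemma isSchroederPath_nil : IsSchroederPath [] :=
  ⟨fun p hp => by simp [List.prefix_nil.mp hp], rfl⟩

lemma IsSchroederPath.even_sxlen {l : List SStep} (hl : IsSchroederPath l) : Even (sxlen l) := by
  simpa [hl.2, Int.even_coe_nat] using even_sxlen_add_sysum l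

lemma isSchroederPath_H_cons_iff {l : List SStep} :
    IsSchroederPath (SStep.H :: l) ↔ IsSchroederPath l := by
  simp [IsSchroederPath, List.forall_prefix_cons_iff]

lemma not_isSchroederPath_D_cons (l : List SStep) : ¬ IsSchroederPath (SStep.D :: l) := by
  intro hl
  simpa using hl.1 [SStep.D] (List.prefix_cons_iff.mpr (.inr ⟨[], rfl, List.nil_prefix⟩))

lemma isSchroederPath_arch {A B : List SStep} (hA : IsSchroederPath A) (hB : IsSchroederPath B) :
    IsSchroederPath (arch A B) := by
  refine ⟨?_, by simp [arch, hA.2, hB.2]⟩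
  simp only [arch, List.forall_prefix_cons_iff, List.forall_prefix_append_iff, sysum_cons,
    sysum_append, sysum_nil, hA.2, SStep.y]
  refine ⟨le_rfl, fun p hp => by linarith [hA.1 p hp], by norm_num, fun t ht => ?_⟩
  linarith [hB.1 t ht]

lemma IsSchroederPath.exists_arch {l : List SStep} (hl : IsSchroederPath (SStep.U :: l)) :
    ∃ A B, l = A ++ SStep.D :: B ∧ IsSchroederPath A ∧ IsSchroederPath B := by
  have hpre : ∀ p, p <+: l → -1 ≤ sysum p := fun p hp => by
    have := hl.1 _ (List.prefix_cons_iff.mpr (.inr ⟨p, rfl, hp⟩))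
    simp only [sysum_cons, SStep.y] at this
    linarith
  have htot : sysum l = -1 := by
    have := hl.2
    simp only [sysum_cons, SStep.y] at this
    linarith
  obtain ⟨A, s, B, rfl, hA, hs⟩ := List.exists_shortest_prefix_not (P := fun p => 0 ≤ sysum p)
    le_rfl ⟨_, List.prefix_refl l, by omega⟩
  have hA0 := hA A (List.prefix_refl A)
  have hAs := hpre (A ++ [s]) (by simp)
  simp only [sysum_append, sysum_cons, sysum_nil, add_zero, not_le] at hs hAs
  obtain ⟨hsumA, rfl⟩ : sysum A = 0 ∧ s = SStep.D := by cases s <;> simp at hs hAs ⊢ <;> omega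
  refine ⟨A, B, rfl, ⟨hA, hsumA⟩, fun p hp => ?_, ?_⟩
  · have := hpre (A ++ SStep.D :: p) (by simpa using hp)
    simp [hsumA] at this
    omega
  · simp [hsumA] at htot
    omega

lemma not_append_D_prefix_of_isSchroederPath {A A' : List SStep} (hA : IsSchroederPath A)
    (hA' : IsSchroederPath A') : ¬ A ++ [SStep.D] <+: A' := by
  intro h
  simpa [hA.2] using hA'.1 _ h

lemma arch_eq_arch_iff {A B A' B' : List SStep} (hA : IsSchroederPath A)
    (hA' : IsSchroederPath A') : arch A B = arch A' B' ↔ A = A' ∧ B = B' := by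
  refine ⟨fun h => ?_, by rintro ⟨rfl, rfl⟩; rfl⟩
  simp only [arch, List.cons.injEq, true_and] at h
  have prefix_of_lt : ∀ {A₁ B₁ A₂ B₂ : List SStep}, A₁ ++ SStep.D :: B₁ = A₂ ++ SStep.D :: B₂ →
      A₁.length < A₂.length → A₁ ++ [SStep.D] <+: A₂ := fun h hlt =>
    List.prefix_of_prefix_length_le ⟨_, by rw [List.append_assoc, List.singleton_append, h]⟩
      (List.prefix_append _ _) (by simpa using hlt)
  have hlen : A.length = A'.length := by
    rcases lt_trichotomy A.length A'.length with hlt | heq | hgt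
    · exact absurd (prefix_of_lt h hlt) (not_append_D_prefix_of_isSchroederPath hA hA')
    · exact heq
    · exact absurd (prefix_of_lt h.symm hgt) (not_append_D_prefix_of_isSchroederPath hA' hA)
  obtain ⟨rfl, hB⟩ := List.append_inj h hlen
  exact ⟨rfl, List.cons_injective hB⟩

lemma hasNoLowPeak_H_cons_iff {l : List SStep} :
    HasNoLowPeak (SStep.H :: l) ↔ HasNoLowPeak l := by
  simp only [HasNoLowPeak, not_iff_not]
  constructor
  · rintro ⟨_ | ⟨s, p⟩, q, h, hp⟩
    · simp at h
    · simp only [List.cons_append, List.cons.injEq] at h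
      obtain ⟨rfl, rfl⟩ := h
      exact ⟨p, q, rfl, by simpa using hp⟩
  · rintro ⟨p, q, rfl, hp⟩
    exact ⟨SStep.H :: p, q, rfl, by simpa using hp⟩

lemma hasNoLowPeak_arch_iff {A B : List SStep} (hA : IsSchroederPath A) :
    HasNoLowPeak (arch A B) ↔ A ≠ [] ∧ HasNoLowPeak B := by
  simp only [HasNoLowPeak, ne_eq, ← not_or, not_iff_not]
  constructor
  · rintro ⟨_ | ⟨s, p⟩, q, h, hp⟩
    · obtain _ | ⟨a, A⟩ := A
      · exact .inl rfl
      · simp only [arch, List.nil_append, List.cons_append, List.cons.injEq, true_and] at h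
        exact absurd (h.1 ▸ hA) (not_isSchroederPath_D_cons A)
    · simp only [arch, List.cons_append, List.cons.injEq] at h
      obtain ⟨rfl, h⟩ := h
      simp only [sysum_cons, SStep.y] at hp
      rcases List.prefix_or_prefix_of_prefix (⟨_, h.symm⟩ : p <+: A ++ SStep.D :: B)
        (List.prefix_append A _) with hpA | ⟨_ | ⟨s, t⟩, rfl⟩
      · have := hA.1 p hpA
        omega
      · simp at h
      · simp only [List.append_assoc, List.append_cancel_left_eq, List.cons_append,
          List.cons.injEq] at h
        obtain ⟨rfl, rfl⟩ := h
        simp only [sysum_append, sysum_cons, SStep.y, hA.2] at hp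
        exact .inr ⟨t, q, rfl, by omega⟩
  · rintro (rfl | ⟨p, q, rfl, hp⟩)
    · exact ⟨[], B, rfl, rfl⟩
    · exact ⟨SStep.U :: (A ++ SStep.D :: p), q, by simp [arch], by simp [hA.2, hp]⟩

lemma finite_setOf_sxlen_eq (n : ℕ) : {l : List SStep | sxlen l = n}.Finite :=
  (List.finite_length_le SStep n).subset fun l hl => hl ▸ length_le_sxlen l

noncomputable def schroederPaths (m : ℕ) : Finset (List SStep) :=
  ((finite_setOf_sxlen_eq (2 * m)).inter_of_left {l | IsSchroederPath l}).toFinset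

noncomputable def noLowPeakPaths (m : ℕ) : Finset (List SStep) :=
  ((finite_setOf_sxlen_eq (2 * m)).inter_of_left
    {l | IsSchroederPath l ∧ HasNoLowPeak l}).toFinset

@[simp] lemma mem_schroederPaths {m : ℕ} {l : List SStep} :
    l ∈ schroederPaths m ↔ sxlen l = 2 * m ∧ IsSchroederPath l := by
  simp [schroederPaths]

@[simp] lemma mem_noLowPeakPaths {m : ℕ} {l : List SStep} :
    l ∈ noLowPeakPaths m ↔ sxlen l = 2 * m ∧ IsSchroederPath l ∧ HasNoLowPeak l := by
  simp [noLowPeakPaths]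

lemma littleSchroeder_eq_card (n : ℕ) : littleSchroeder n = #(noLowPeakPaths (n + 1)) := by
  rw [littleSchroeder, ← Nat.card_eq_finsetCard]
  exact Nat.card_congr (Equiv.subtypeEquivRight fun l => by simp [isLittleSchroederPath_iff])

lemma sxlen_eq_zero_iff {l : List SStep} : sxlen l = 0 ↔ l = [] :=
  ⟨fun h => List.eq_nil_of_length_eq_zero (Nat.le_zero.mp (h ▸ length_le_sxlen l)),
    fun h => h ▸ rfl⟩

lemma schroederPaths_zero : schroederPaths 0 = {[]} := by
  ext l
  simp only [mem_schroederPaths, mul_zero, sxlen_eq_zero_iff, mem_singleton]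
  exact ⟨And.left, fun h => ⟨h, h ▸ isSchroederPath_nil⟩⟩

lemma noLowPeakPaths_zero : noLowPeakPaths 0 = {[]} := by
  ext l
  simp only [mem_noLowPeakPaths, mul_zero, sxlen_eq_zero_iff, mem_singleton]
  exact ⟨And.left, fun h => ⟨h, h ▸ isSchroederPath_nil, by simp [h, HasNoLowPeak]⟩⟩

lemma mem_schroederPaths_succ {m : ℕ} {l : List SStep} :
    l ∈ schroederPaths (m + 1) ↔ (∃ B ∈ schroederPaths m, SStep.H :: B = l) ∨
      ∃ a b, a + b = m ∧
        ∃ A B, (A ∈ schroederPaths a ∧ B ∈ schroederPaths b) ∧ arch A B = l := by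
  simp only [mem_schroederPaths]
  constructor
  · rintro ⟨hlen, hl⟩
    match l, hl with
    | [], _ => simp at hlen
    | SStep.H :: B, hl =>
      simp only [sxlen_cons, SStep.x] at hlen
      exact .inl ⟨B, ⟨by omega, isSchroederPath_H_cons_iff.mp hl⟩, rfl⟩
    | SStep.D :: l, hl => exact absurd hl (not_isSchroederPath_D_cons l)
    | SStep.U :: l, hl =>
      obtain ⟨A, B, rfl, hA, hB⟩ := hl.exists_arch
      obtain ⟨a, ha⟩ := hA.even_sxlen
      simp only [sxlen_cons, sxlen_append, SStep.x] at hlen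
      exact .inr ⟨a, m - a, by omega, A, B, ⟨⟨by omega, hA⟩, ⟨by omega, hB⟩⟩, rfl⟩
  · rintro (⟨B, ⟨hlen, hB⟩, rfl⟩ | ⟨a, b, rfl, A, B, ⟨⟨hA, hA'⟩, ⟨hB, hB'⟩⟩, rfl⟩)
    · exact ⟨by simp [hlen]; ring, isSchroederPath_H_cons_iff.mpr hB⟩
    · exact ⟨by simp [arch, hA, hB]; ring, isSchroederPath_arch hA' hB'⟩

lemma schroederPaths_succ (m : ℕ) :
    schroederPaths (m + 1) = (schroederPaths m).image (SStep.H :: ·) ∪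
      (antidiagonal m).biUnion fun ab =>
        (schroederPaths ab.1 ×ˢ schroederPaths ab.2).image fun AB => arch AB.1 AB.2 := by
  ext l
  simp [mem_schroederPaths_succ, -mem_schroederPaths]

lemma noLowPeakPaths_succ (m : ℕ) :
    noLowPeakPaths (m + 1) = (noLowPeakPaths m).image (SStep.H :: ·) ∪
      (antidiagonal m).biUnion fun ab =>
        ((schroederPaths ab.1).erase [] ×ˢ noLowPeakPaths ab.2).image fun AB => arch AB.1 AB.2 := by
  ext l
  have hmem : l ∈ noLowPeakPaths (m + 1) ↔ l ∈ schroederPaths (m + 1) ∧ HasNoLowPeak l := by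
    simp [and_assoc]
  rw [hmem, mem_schroederPaths_succ]
  simp only [mem_union, mem_image, mem_biUnion, mem_product, HasAntidiagonal.mem_antidiagonal,
    mem_erase, Prod.exists, mem_noLowPeakPaths, mem_schroederPaths]
  constructor
  · rintro ⟨⟨B, ⟨hlen, hB⟩, rfl⟩ | ⟨a, b, hab, A, B, ⟨⟨hA, hA'⟩, ⟨hB, hB'⟩⟩, rfl⟩, hpeak⟩
    · exact .inl ⟨B, ⟨hlen, hB, hasNoLowPeak_H_cons_iff.mp hpeak⟩, rfl⟩
    · obtain ⟨hne, hpeak⟩ := (hasNoLowPeak_arch_iff hA').mp hpeak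
      exact .inr ⟨a, b, hab, A, B, ⟨⟨hne, hA, hA'⟩, hB, hB', hpeak⟩, rfl⟩
  · rintro (⟨B, ⟨hlen, hB, hpeak⟩, rfl⟩ |
      ⟨a, b, hab, A, B, ⟨⟨hne, hA, hA'⟩, hB, hB', hpeak⟩, rfl⟩)
    · exact ⟨.inl ⟨B, ⟨hlen, hB⟩, rfl⟩, hasNoLowPeak_H_cons_iff.mpr hpeak⟩
    · exact ⟨.inr ⟨a, b, hab, A, B, ⟨⟨hA, hA'⟩, hB, hB'⟩, rfl⟩,
        (hasNoLowPeak_arch_iff hA').mpr ⟨hne, hpeak⟩⟩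

lemma card_image_H_cons_union_arches (m : ℕ) (s : Finset (List SStep))
    (u v : ℕ → Finset (List SStep)) (hu : ∀ a, u a ⊆ schroederPaths a) :
    #(s.image (SStep.H :: ·) ∪ (antidiagonal m).biUnion fun ab =>
        (u ab.1 ×ˢ v ab.2).image fun AB => arch AB.1 AB.2) =
      #s + ∑ ab ∈ antidiagonal m, #(u ab.1) * #(v ab.2) := by
  have harch : ∀ {a a' A A' B B'}, A ∈ u a → A' ∈ u a' → arch A B = arch A' B' →
      a = a' ∧ A = A' ∧ B = B' := fun hA hA' h => by
    obtain ⟨hlen, hA⟩ := mem_schroederPaths.mp (hu _ hA)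
    obtain ⟨hlen', hA'⟩ := mem_schroederPaths.mp (hu _ hA')
    obtain ⟨rfl, rfl⟩ := (arch_eq_arch_iff hA hA').mp h
    exact ⟨by omega, rfl, rfl⟩
  rw [card_union_of_disjoint, card_image_of_injective _ List.cons_injective, card_biUnion]
  · refine congrArg _ (sum_congr rfl fun ab _ => ?_)
    rw [card_image_of_injOn, card_product]
    rintro ⟨A, B⟩ hAB ⟨A', B'⟩ hAB' h
    simp only [coe_product, Set.mem_prod, mem_coe] at hAB hAB'
    obtain ⟨-, rfl, rfl⟩ := harch hAB.1 hAB'.1 h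
    rfl
  · intro ab hab ab' hab' hne
    simp only [Function.onFun, disjoint_left, mem_image, mem_product, Prod.exists, not_exists,
      not_and]
    rintro _ ⟨A, B, ⟨hA, -⟩, rfl⟩ A' B' ⟨hA', -⟩ h
    obtain ⟨h1, -⟩ := harch hA' hA h
    rw [mem_coe, HasAntidiagonal.mem_antidiagonal] at hab hab'
    exact hne (Prod.ext h1.symm (by omega))
  · simp [disjoint_left, arch]

theorem PowerSeries.eq_of_eq_add_X_mul_quadratic {R : Type*} [CommRing R] {c a b f g : R⟦X⟧}
    (hf : f = c + X * (a * f + b * f ^ 2)) (hg : g = c + X * (a * g + b * g ^ 2)) : f = g := by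
  have hunit : IsUnit (1 - X * (a + b * (f + g))) := isUnit_iff_constantCoeff.mpr (by simp)
  have hprod : (1 - X * (a + b * (f + g))) * (f - g) = 0 := by linear_combination hf - hg
  exact sub_eq_zero.mp (hunit.mul_right_eq_zero.mp hprod)

section Series

variable (R : Type*) [CommRing R]

noncomputable def schroederSeries : R⟦X⟧ := mk fun m => (#(schroederPaths m) : R)

noncomputable def noLowPeakSeries : R⟦X⟧ := mk fun m => (#(noLowPeakPaths m) : R)

noncomputable def littleSchroederSeries : R⟦X⟧ := mk fun n => (littleSchroeder n : R)

lemma schroederSeries_eq :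
    schroederSeries R = 1 + X * schroederSeries R + X * schroederSeries R ^ 2 := by
  ext (_ | m)
  · simp [schroederSeries, schroederPaths_zero]
  · rw [schroederSeries, coeff_mk, schroederPaths_succ,
      card_image_H_cons_union_arches m _ _ _ fun _ => subset_rfl, map_add, map_add,
      coeff_succ_X_mul, coeff_succ_X_mul, sq, coeff_mul]
    simp

lemma card_schroederPaths_erase_nil (a : ℕ) :
    (#((schroederPaths a).erase []) : R) = coeff a (schroederSeries R - 1) := by
  rcases a with _ | a
  · simp [schroederPaths_zero, schroederSeries]
  · rw [erase_eq_of_notMem (by simp)]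
    simp [schroederSeries, coeff_one]

lemma noLowPeakSeries_eq :
    noLowPeakSeries R =
      1 + X * noLowPeakSeries R + X * ((schroederSeries R - 1) * noLowPeakSeries R) := by
  ext (_ | m)
  · simp [noLowPeakSeries, noLowPeakPaths_zero]
  · rw [noLowPeakSeries, coeff_mk, noLowPeakPaths_succ,
      card_image_H_cons_union_arches m _ _ _ fun _ => erase_subset _ _, map_add, map_add,
      coeff_succ_X_mul, coeff_succ_X_mul, coeff_mul]
    simp [card_schroederPaths_erase_nil]

/-- Both sides times `1 - X S` equal `2`, and `1 - X S` is a unit. -/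
lemma schroederSeries_add_one : schroederSeries R + 1 = 2 * noLowPeakSeries R := by
  have hunit : IsUnit (1 - X * schroederSeries R) := isUnit_iff_constantCoeff.mpr (by simp)
  refine hunit.mul_left_cancel ?_
  linear_combination schroederSeries_eq R - 2 * noLowPeakSeries_eq R

lemma noLowPeakSeries_eq_one_add_X_mul :
    noLowPeakSeries R = 1 + X * littleSchroederSeries R := by
  ext (_ | n)
  · simp [noLowPeakSeries, noLowPeakPaths_zero]
  · simp [noLowPeakSeries, littleSchroederSeries, littleSchroeder_eq_card, coeff_succ_X_mul,
      coeff_one]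

theorem littleSchroederSeries_eq :
    littleSchroederSeries R =
      1 + X * (3 * littleSchroederSeries R + 2 * X * littleSchroederSeries R ^ 2) := by
  have hN := noLowPeakSeries_eq_one_add_X_mul R
  have hS : schroederSeries R = 1 + 2 * X * littleSchroederSeries R := by
    linear_combination schroederSeries_add_one R + 2 * hN
  have hrec := noLowPeakSeries_eq R
  rw [hS, hN] at hrec
  refine X_mul_cancel ?_
  linear_combination hrec

end Series

/-- If `f = ∑ fₙ xⁿ` where `fₙ` is the total weight of `(3,2)`-Motzkin paths of length
`n`, and `f` satisfies `f = 1 + 3x f + 2x² f²`, then `f = (1-3x-√(1-6x+x²))/(4x²)`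
(equivalently, `(1 - 3x - 4x² f)² = 1 - 6x + x²`), and `fₙ` is the `n`-th little
Schröder number. -/
theorem stmt_6 (f : PowerSeries ℚ)
    (hf : ∀ n, PowerSeries.coeff n f = motzkinWt 3 2 n)
    (heq : f = 1 + 3 * PowerSeries.X * f + 2 * PowerSeries.X ^ 2 * f ^ 2) :
    (1 - 3 * PowerSeries.X - 4 * PowerSeries.X ^ 2 * f) ^ 2 =
        1 - 6 * PowerSeries.X + PowerSeries.X ^ 2 ∧
      ∀ n, motzkinWt 3 2 n = littleSchroeder n := by
  refine ⟨by linear_combination (-8 * X ^ 2 : ℚ⟦X⟧) * heq, fun n => ?_⟩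
  have hfL : f = littleSchroederSeries ℚ :=
    eq_of_eq_add_X_mul_quadratic (by linear_combination heq) (littleSchroederSeries_eq ℚ)
  have hcoeff := congrArg (coeff n) hfL
  rw [hf, littleSchroederSeries, coeff_mk] at hcoeff
  exact_mod_cast hcoeff
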